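/- arXiv:1809.10325 — 10 statements merged into one kernel-verified Lean document; each statement's English description precedes it below -/
import Mathlib

section
/- In the complete bipartite graph K_{a,b} with a ≤ b and a,b ≥ 1, the quantity min over k of (S(k) + k) equals a + 1, where S(k) is the minimum size of a k-vertex separator. -/
open SimpleGraph

/-- `U` is a `k`-vertex separator of `G`: every connected component of the
induced subgraph on the complement of `U` has at most `k` vertices. -/
def IsKSep {V : Type*} (G : SimpleGraph V) (U : Finset V) (k : ℕ) : Prop :=
  ∀ c : (G.induce ((↑U : Set V)ᶜ)).ConnectedComponent, c.supp.ncard ≤ k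

/-- `S_G(k)`: the minimum size of a `k`-vertex separator of `G`. -/
noncomputable def sepNum {V : Type*} [Fintype V] (G : SimpleGraph V) (k : ℕ) : ℕ :=
  sInf {s | ∃ U : Finset V, IsKSep G U k ∧ U.card = s}

/-- `min_{k ≥ 1} (S_G(k) + k)`. -/
noncomputable def minSep {V : Type*} [Fintype V] (G : SimpleGraph V) : ℕ :=
  sInf {x | ∃ k, 1 ≤ k ∧ x = sepNum G k + k}

lemma key_lemma (a b k : ℕ) (ha : 1 ≤ a) (hab : a ≤ b) (hk : 1 ≤ k)
    (U : Finset (Fin a ⊕ Fin b))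
    (hU : IsKSep (completeBipartiteGraph (Fin a) (Fin b)) U k) :
    a + 1 ≤ U.card + k := by
  by_contra h
  push_neg at h
  have hUa : U.card < a := by omega
  have hUb : U.card < b := by omega
  have hx : ∃ x : Fin a, Sum.inl x ∉ U := by
    by_contra hc
    push_neg at hc
    have hsub : (Finset.univ.image (Sum.inl : Fin a → Fin a ⊕ Fin b)) ⊆ U := by
      intro v hv
      simp only [Finset.mem_image, Finset.mem_univ, true_and] at hv
      obtain ⟨x, rfl⟩ := hv
      exact hc x
    have := Finset.card_le_card hsub
    rw [Finset.card_image_of_injective _ Sum.inl_injective, Finset.card_univ,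
      Fintype.card_fin] at this
    omega
  have hy : ∃ y : Fin b, Sum.inr y ∉ U := by
    by_contra hc
    push_neg at hc
    have hsub : (Finset.univ.image (Sum.inr : Fin b → Fin a ⊕ Fin b)) ⊆ U := by
      intro v hv
      simp only [Finset.mem_image, Finset.mem_univ, true_and] at hv
      obtain ⟨y, rfl⟩ := hv
      exact hc y
    have := Finset.card_le_card hsub
    rw [Finset.card_image_of_injective _ Sum.inr_injective, Finset.card_univ,
      Fintype.card_fin] at this
    omega
  obtain ⟨x, hx⟩ := hx
  obtain ⟨y, hy⟩ := hy
  set s : Set (Fin a ⊕ Fin b) := (↑U : Set (Fin a ⊕ Fin b))ᶜ with hs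
  have hxs : (Sum.inl x : Fin a ⊕ Fin b) ∈ s := hx
  have hys : (Sum.inr y : Fin a ⊕ Fin b) ∈ s := hy
  set G' := (completeBipartiteGraph (Fin a) (Fin b)).induce s with hG'
  have hadj : ∀ (u : Fin a) (v : Fin b) (hu : Sum.inl u ∈ s) (hv : Sum.inr v ∈ s),
      G'.Adj ⟨Sum.inl u, hu⟩ ⟨Sum.inr v, hv⟩ := by
    intro u v hu hv
    show (completeBipartiteGraph (Fin a) (Fin b)).Adj (Sum.inl u) (Sum.inr v)
    simp
  have hreach : ∀ w : s, G'.Reachable w ⟨Sum.inl x, hxs⟩ := by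
    rintro ⟨val, hw⟩
    cases val with
    | inl u => exact ((hadj u y hw hys).reachable).trans ((hadj x y hxs hys).symm.reachable)
    | inr v => exact ((hadj x v hxs hw).symm).reachable
  have hsupp : (G'.connectedComponentMk ⟨Sum.inl x, hxs⟩).supp = Set.univ := by
    apply Set.eq_univ_of_forall
    intro w
    exact ConnectedComponent.sound (hreach w)
  have hcard := hU (G'.connectedComponentMk ⟨Sum.inl x, hxs⟩)
  rw [hsupp, Set.ncard_univ] at hcard
  rw [show ((↑U : Set (Fin a ⊕ Fin b))ᶜ) = s from rfl] at hcard
  have hc2 : Nat.card s + U.card = a + b := by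
    have h1 : (↑U : Set (Fin a ⊕ Fin b)).ncard + s.ncard = Nat.card (Fin a ⊕ Fin b) :=
      Set.ncard_add_ncard_compl _
    rw [Set.ncard_coe_finset] at h1
    have h2 : Nat.card (Fin a ⊕ Fin b) = a + b := by
      simp [Nat.card_eq_fintype_card]
    have h3 : Nat.card s = s.ncard := (Nat.card_coe_set_eq s).symm ▸ rfl
    rw [Nat.card_coe_set_eq s]
    omega
  omega


lemma sepNum_set_nonempty {V : Type*} [Fintype V] (G : SimpleGraph V) (k : ℕ) :
    {s | ∃ U : Finset V, IsKSep G U k ∧ U.card = s}.Nonempty := by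
  refine ⟨(Finset.univ : Finset V).card, Finset.univ, ?_, rfl⟩
  intro c
  obtain ⟨⟨v, hv⟩, -⟩ := c.exists_rep
  simp at hv

theorem minSep_completeBipartite (a b : ℕ) (ha : 1 ≤ a) (hb : 1 ≤ b) (hab : a ≤ b) :
    minSep (completeBipartiteGraph (Fin a) (Fin b)) = a + 1 := by
  set G := completeBipartiteGraph (Fin a) (Fin b) with hG
  apply le_antisymm
  · -- upper bound
    set L : Finset (Fin a ⊕ Fin b) := Finset.univ.image (Sum.inl : Fin a → Fin a ⊕ Fin b)
      with hL
    have hLcard : L.card = a := by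
      rw [hL, Finset.card_image_of_injective _ Sum.inl_injective, Finset.card_univ,
        Fintype.card_fin]
    have noadj : ∀ u v : ((↑L : Set (Fin a ⊕ Fin b))ᶜ : Set (Fin a ⊕ Fin b)),
        ¬ (G.induce ((↑L : Set (Fin a ⊕ Fin b))ᶜ)).Adj u v := by
      rintro ⟨uv, hu⟩ ⟨vv, hv⟩ hadj
      simp only [hL, Set.mem_compl_iff, Finset.coe_image, Finset.coe_univ, Set.image_univ,
        Set.mem_range, not_exists] at hu hv
      cases uv with
      | inl u => exact hu u rfl
      | inr u =>
        cases vv with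
        | inl v => exact hv v rfl
        | inr v =>
          have : G.Adj (Sum.inr u) (Sum.inr v) := hadj
          simp [hG] at this
    have hKsep : IsKSep G L 1 := by
      intro c
      obtain ⟨w, hw⟩ := c.exists_rep
      have hsub : c.supp ⊆ {w} := by
        intro u hu
        rw [ConnectedComponent.mem_supp_iff] at hu
        have hr : (G.induce ((↑L : Set (Fin a ⊕ Fin b))ᶜ)).Reachable u w :=
          ConnectedComponent.exact (hu.trans hw.symm)
        obtain ⟨p⟩ := hr
        cases p with
        | nil => rfl
        | cons h _ => exact absurd h (noadj _ _)
      calc c.supp.ncard ≤ ({w} : Set _).ncard :=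
            Set.ncard_le_ncard hsub (Set.finite_singleton w)
        _ = 1 := Set.ncard_singleton w
    have h1 : sepNum G 1 ≤ a := by
      have h2 := Nat.sInf_le (s := {s | ∃ U : Finset (Fin a ⊕ Fin b), IsKSep G U 1 ∧ U.card = s})
        ⟨L, hKsep, hLcard⟩
      exact h2
    have h3 : minSep G ≤ sepNum G 1 + 1 := by
      unfold minSep
      exact Nat.sInf_le ⟨1, le_refl 1, rfl⟩
    calc minSep G ≤ sepNum G 1 + 1 := h3
      _ ≤ a + 1 := by omega
  · -- lower bound
    unfold minSep
    refine le_csInf ⟨sepNum G 1 + 1, ⟨1, le_refl 1, rfl⟩⟩ ?_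
    rintro x ⟨k, hk, rfl⟩
    by_cases hka : a + 1 ≤ k
    · omega
    push_neg at hka
    have hmem := Nat.sInf_mem (sepNum_set_nonempty G k)
    obtain ⟨U, hU, hcard⟩ := hmem
    have := key_lemma a b k ha hab hk U hU
    unfold sepNum
    omega
end

section
/- Let G = (V,E) be a finite simple graph, and suppose that for some k ≥ 1 there is a set U of size s such that removing U leaves components of size at most k. Then for any b ≥ s + k, a corrupt party with budget b has a strategy (corrupting U together with one component of the remaining graph, with appropriate reports) under which, for every vertex v ∈ V, there is a consistent assignment of identities with at most b corrupt nodes in which v is corrupt. Consequently m(G) ≤ min over k of (S_G(k) + k). -/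
open SimpleGraph

open SimpleGraph

/-- A configuration `f` (true = truthful, false = corrupt) is consistent with the
reports `rep` if every truthful vertex reports the true type of each of its neighbors. -/
def Consistent {V : Type*} (G : SimpleGraph V) (f : V → Bool) (rep : V → V → Bool) : Prop :=
  ∀ u v : V, G.Adj u v → f u = true → rep u v = f v

/-- The number of corrupt vertices in a configuration. -/
noncomputable def badCount {V : Type*} (f : V → Bool) : ℕ :=
  {v : V | f v = false}.ncard

/-- `m(G)`: the minimum budget `b` for which the corrupt party has a placement of at most
`b` corrupt vertices and reports making it impossible to identify a single truthful vertex,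
i.e. every vertex is corrupt in some configuration consistent with the reports that has
at most `b` corrupt vertices. -/
noncomputable def mNum {V : Type*} [Fintype V] (G : SimpleGraph V) : ℕ :=
  sInf {b | ∃ rep : V → V → Bool, ∀ v : V, ∃ f : V → Bool,
    Consistent G f rep ∧ badCount f ≤ b ∧ f v = false}

/-!
Let every vertex report that exactly the vertices of `U` are corrupt. A vertex of `U` is then
corrupt in the configuration whose corrupt set is `U`. A vertex `v ∉ U` is corrupt in the
configuration whose corrupt set is `U` together with the component `C` of `v` in `G - U`: a
truthful vertex lies outside `U ∪ C`, so its neighbours outside `U` lie in its own component,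
which is not `C`, and the reports are correct. Both configurations have at most `|U| + k`
corrupt vertices.
-/

namespace SimpleGraph

variable {V : Type*}

open Classical in
noncomputable def configOf (T : Set V) : V → Bool := fun v => decide (v ∉ T)

@[simp]
lemma configOf_eq_false {T : Set V} {v : V} : configOf T v = false ↔ v ∈ T := by
  simp [configOf]

lemma badCount_configOf (T : Set V) : badCount (configOf T) = T.ncard := by
  simp only [badCount, configOf_eq_false, Set.ofPred_mem_eq]

lemma consistent_configOf (G : SimpleGraph V) {S T : Set V} (hST : S ⊆ T)
    (hclosed : ∀ u w, G.Adj u w → u ∉ T → w ∉ S → w ∉ T) :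
    Consistent G (configOf T) (fun _ => configOf S) := by
  intro u w huw hu
  have hu : u ∉ T := by simpa [configOf] using hu
  by_cases hw : w ∈ S
  · simp [configOf, hw, hST hw]
  · simp [configOf, hw, hclosed u w huw hu hw]

variable (G : SimpleGraph V) (U : Finset V)

def unionComponent (C : (G.induce ((U : Set V)ᶜ)).ConnectedComponent) : Set V :=
  (U : Set V) ∪ Subtype.val '' C.supp

lemma unionComponent_closed (C : (G.induce ((U : Set V)ᶜ)).ConnectedComponent)
    (u w : V) (huw : G.Adj u w) (hu : u ∉ unionComponent G U C) (hw : w ∉ (U : Set V)) :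
    w ∉ unionComponent G U C := by
  simp only [unionComponent, Set.mem_union, not_or] at hu ⊢
  refine ⟨hw, ?_⟩
  rintro ⟨⟨w', hw'⟩, hwC, rfl⟩
  have hadj : (G.induce ((U : Set V)ᶜ)).Adj ⟨u, hu.1⟩ ⟨w', hw'⟩ := huw
  exact hu.2 ⟨⟨u, hu.1⟩, (ConnectedComponent.connectedComponentMk_eq_of_adj hadj).trans hwC,
    rfl⟩

variable {G U}

lemma ncard_unionComponent_le {k : ℕ} (hU : IsKSep G U k)
    (C : (G.induce ((U : Set V)ᶜ)).ConnectedComponent) :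
    (unionComponent G U C).ncard ≤ U.card + k :=
  calc (unionComponent G U C).ncard
      ≤ (U : Set V).ncard + (Subtype.val '' C.supp).ncard := Set.ncard_union_le _ _
    _ = U.card + C.supp.ncard := by
        rw [Set.ncard_coe_finset, Set.ncard_image_of_injective _ Subtype.val_injective]
    _ ≤ U.card + k := Nat.add_le_add_left (hU C) _

theorem exists_consistent_corrupt_of_isKSep {k : ℕ} (hU : IsKSep G U k) (v : V) :
    ∃ f : V → Bool, Consistent G f (fun _ => configOf U) ∧
      badCount f ≤ U.card + k ∧ f v = false := by
  by_cases hv : v ∈ U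
  · refine ⟨configOf U, consistent_configOf G le_rfl fun _ _ _ _ hw => hw, ?_, by simpa⟩
    rw [badCount_configOf, Set.ncard_coe_finset]
    exact Nat.le_add_right _ _
  · have hv' : v ∈ (U : Set V)ᶜ := hv
    set C := (G.induce ((U : Set V)ᶜ)).connectedComponentMk ⟨v, hv'⟩
    refine ⟨configOf (unionComponent G U C),
      consistent_configOf G Set.subset_union_left (unionComponent_closed G U C), ?_, ?_⟩
    · rw [badCount_configOf]
      exact ncard_unionComponent_le hU C
    · rw [configOf_eq_false]
      exact Or.inr ⟨⟨v, hv'⟩, rfl, rfl⟩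

variable [Fintype V]

lemma isKSep_univ (k : ℕ) : IsKSep G Finset.univ k := by
  intro c
  have : c.supp = ∅ := Set.eq_empty_of_forall_notMem fun ⟨x, hx⟩ _ => hx (Finset.mem_univ x)
  simp [this]

lemma mNum_le_of_isKSep {k : ℕ} (hU : IsKSep G U k) : mNum G ≤ U.card + k :=
  Nat.sInf_le ⟨_, exists_consistent_corrupt_of_isKSep hU⟩

lemma mNum_le_sepNum_add (k : ℕ) : mNum G ≤ sepNum G k + k := by
  obtain ⟨U, hU, hcard⟩ := Nat.sInf_mem (⟨_, Finset.univ, isKSep_univ k, rfl⟩ :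
    {s | ∃ U : Finset V, IsKSep G U k ∧ U.card = s}.Nonempty)
  rw [sepNum, ← hcard]
  exact mNum_le_of_isKSep hU

lemma mNum_le_minSep : mNum G ≤ minSep G := by
  obtain ⟨k, -, hk⟩ := Nat.sInf_mem (⟨_, 1, le_rfl, rfl⟩ :
    {x | ∃ k, 1 ≤ k ∧ x = sepNum G k + k}.Nonempty)
  rw [minSep, hk]
  exact mNum_le_sepNum_add k

end SimpleGraph

theorem corrupt_strategy_from_separator_general {V : Type*} [Fintype V] (G : SimpleGraph V)
    (k s : ℕ) (U : Finset V) (hU : IsKSep G U k) (hs : U.card = s) :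
    (∀ b : ℕ, s + k ≤ b → ∃ rep : V → V → Bool, ∀ v : V, ∃ f : V → Bool,
      Consistent G f rep ∧ badCount f ≤ b ∧ f v = false) ∧
    mNum G ≤ minSep G := by
  refine ⟨fun b hb => ⟨fun _ => configOf U, fun v => ?_⟩, mNum_le_minSep⟩
  obtain ⟨f, hcons, hcount, hv⟩ := exists_consistent_corrupt_of_isKSep hU v
  exact ⟨f, hcons, hcount.trans (hs ▸ hb), hv⟩

theorem corrupt_strategy_from_separator {V : Type*} [Fintype V] (G : SimpleGraph V)
    (k s : ℕ) (hk : 1 ≤ k) (U : Finset V) (hU : IsKSep G U k) (hs : U.card = s) :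
    (∀ b : ℕ, s + k ≤ b → ∃ rep : V → V → Bool, ∀ v : V, ∃ f : V → Bool,
      Consistent G f rep ∧ badCount f ≤ b ∧ f v = false) ∧
    mNum G ≤ minSep G :=
  corrupt_strategy_from_separator_general G k s U hU hs
end

section
/- Let G = (V,E) be a finite simple graph. Then (1/2) · min over k ≥ 1 of (S_G(k) + k) ≤ m(G) ≤ min over k ≥ 1 of (S_G(k) + k), where m(G) is the critical number of corrupt nodes and S_G(k) the minimum k-vertex separator size. -/
open SimpleGraph

open SimpleGraph

section Aux

variable {V : Type*} [Fintype V] (G : SimpleGraph V)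

lemma mNum_spec [Nonempty V] :
    ∃ rep : V → V → Bool, ∀ v : V, ∃ f : V → Bool,
      Consistent G f rep ∧ badCount f ≤ mNum G ∧ f v = false := by
  have hne : {b | ∃ rep : V → V → Bool, ∀ v : V, ∃ f : V → Bool,
      Consistent G f rep ∧ badCount f ≤ b ∧ f v = false}.Nonempty := by
    refine ⟨Fintype.card V, fun _ _ => false, fun v => ⟨fun _ => false, ?_, ?_, rfl⟩⟩
    · intro u w _ hu; simp at hu
    · have : badCount (fun _ : V => false) ≤ Set.univ.ncard :=
        Set.ncard_le_ncard (Set.subset_univ _) Set.finite_univ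
      simpa [Set.ncard_univ, Nat.card_eq_fintype_card] using this
  exact Nat.sInf_mem hne

lemma one_le_mNum [Nonempty V] : 1 ≤ mNum G := by
  by_contra h
  push_neg at h
  obtain ⟨rep, hrep⟩ := mNum_spec G
  obtain ⟨v⟩ := (inferInstance : Nonempty V)
  obtain ⟨f, _, hb, hv⟩ := hrep v
  have hpos : 0 < badCount f :=
    Set.ncard_pos (Set.toFinite _) |>.mpr ⟨v, hv⟩
  omega

lemma mNum_le_sep (U : Finset V) (k : ℕ) (hU : IsKSep G U k) : mNum G ≤ U.card + k := by
  classical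
  apply Nat.sInf_le
  refine ⟨fun _ w => decide (w ∉ U), fun v => ?_⟩
  by_cases hv : v ∈ U
  · refine ⟨fun w => decide (w ∉ U), fun u w _ _ => rfl, ?_, by simp [hv]⟩
    have hset : {w : V | (decide (w ∉ U) : Bool) = false} = ↑U := by
      ext w; simp
    rw [badCount, hset, Set.ncard_coe_finset]
    omega
  · have hv' : v ∈ ((↑U : Set V)ᶜ) := by simpa using hv
    set GU := G.induce ((↑U : Set V)ᶜ) with hGU
    set c := GU.connectedComponentMk ⟨v, hv'⟩ with hc
    set f : V → Bool := fun w =>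
      if h : w ∈ ((↑U : Set V)ᶜ) then decide (GU.connectedComponentMk ⟨w, h⟩ ≠ c) else false
      with hf
    refine ⟨f, ?_, ?_, ?_⟩
    · intro u w hadj hu
      have hucompl : u ∈ ((↑U : Set V)ᶜ) := by
        by_contra hcon
        simp only [hf, dif_neg hcon] at hu
        simp at hu
      have hune : GU.connectedComponentMk ⟨u, hucompl⟩ ≠ c := by
        simp only [hf, dif_pos hucompl] at hu
        simpa using hu
      by_cases hw : w ∈ ((↑U : Set V)ᶜ)
      · have hadj' : GU.Adj ⟨u, hucompl⟩ ⟨w, hw⟩ := hadj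
        have hmk : GU.connectedComponentMk ⟨w, hw⟩ = GU.connectedComponentMk ⟨u, hucompl⟩ :=
          ConnectedComponent.sound hadj'.symm.reachable
        have hwU : w ∉ U := by simpa using hw
        simp [hf, dif_pos hw, hmk, hune, hwU]
      · have hwU : w ∈ U := by simpa using hw
        simp [hf, dif_neg hw, hwU]
    · have hset : {w : V | f w = false} ⊆ ↑U ∪ (Subtype.val '' c.supp) := by
        intro w hw
        by_cases hwc : w ∈ ((↑U : Set V)ᶜ)
        · right
          simp only [Set.mem_setOf_eq, hf, dif_pos hwc] at hw
          have : GU.connectedComponentMk ⟨w, hwc⟩ = c := by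
            by_contra hcon; simp [hcon] at hw
          exact ⟨⟨w, hwc⟩, this, rfl⟩
        · left; simpa using hwc
      calc badCount f ≤ (↑U ∪ (Subtype.val '' c.supp)).ncard :=
            Set.ncard_le_ncard hset (Set.toFinite _)
        _ ≤ (↑U : Set V).ncard + (Subtype.val '' c.supp).ncard := Set.ncard_union_le _ _
        _ = U.card + c.supp.ncard := by
            rw [Set.ncard_coe_finset, Set.ncard_image_of_injective _ Subtype.val_injective]
        _ ≤ U.card + k := by have := hU c; omega
    · have : GU.connectedComponentMk ⟨v, hv'⟩ = c := rfl
      simp [hf, dif_pos hv', this]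

lemma mNum_le_minSep [Nonempty V] : mNum G ≤ minSep G := by
  have hne : {x | ∃ k, 1 ≤ k ∧ x = sepNum G k + k}.Nonempty :=
    ⟨sepNum G 1 + 1, 1, le_refl 1, rfl⟩
  obtain ⟨k, hk, heq⟩ := Nat.sInf_mem hne
  have hsep_ne : {s | ∃ U : Finset V, IsKSep G U k ∧ U.card = s}.Nonempty := by
    refine ⟨(Finset.univ : Finset V).card, Finset.univ, ?_, rfl⟩
    intro c
    have hsupp : c.supp = ∅ := Set.eq_empty_iff_forall_notMem.mpr
      (fun x _ => absurd x.2 (by simp))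
    simp [hsupp]
  obtain ⟨U, hU, hcard⟩ := Nat.sInf_mem hsep_ne
  calc mNum G ≤ U.card + k := mNum_le_sep G U k hU
    _ = sepNum G k + k := by rw [hcard]; rfl
    _ = minSep G := heq.symm

lemma minSep_le_two_mNum [Nonempty V] : minSep G ≤ 2 * mNum G := by
  classical
  obtain ⟨rep, hrep⟩ := mNum_spec G
  set b := mNum G with hb
  obtain ⟨v₀⟩ := (inferInstance : Nonempty V)
  obtain ⟨f₀, hc₀, hb₀, _⟩ := hrep v₀
  set B : Finset V := Finset.univ.filter (fun w => f₀ w = false) with hB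
  have hBcoe : (↑B : Set V) = {w | f₀ w = false} := by ext w; simp [hB]
  have hBcard : B.card ≤ b := by
    rw [← Set.ncard_coe_finset, hBcoe]; exact hb₀
  set GB := G.induce ((↑B : Set V)ᶜ) with hGB
  have hsep : IsKSep G B b := by
    intro c
    obtain ⟨x, hxc⟩ := c.exists_rep
    obtain ⟨f, hcf, hbf, hfx⟩ := hrep x.val
    have hmem : ∀ (y : ((↑B : Set V)ᶜ : Set V)), f₀ y.val = true := by
      intro y
      have h2 : y.val ∉ B := y.2
      simp [hB] at h2
      exact h2
    have key : ∀ (y z : ((↑B : Set V)ᶜ : Set V)) (p : GB.Walk y z),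
        f y.val = true → f z.val = true := by
      intro y z p
      induction p with
      | nil => exact id
      | cons h p ih =>
        rename_i y' w' z'
        intro hy
        apply ih
        have hGadj : G.Adj y'.val w'.val := h
        have hy₀ : f₀ y'.val = true := hmem y'
        have hw₀ : f₀ w'.val = true := hmem w'
        have h1 : rep y'.val w'.val = f₀ w'.val := hc₀ _ _ hGadj hy₀
        have h2 : rep y'.val w'.val = f w'.val := hcf _ _ hGadj hy
        rw [← h2, h1, hw₀]
    have hall : ∀ y ∈ c.supp, f y.val = false := by
      intro y hy
      rw [ConnectedComponent.mem_supp_iff] at hy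
      by_contra hcon
      have hy' : f y.val = true := by
        cases hft : f y.val
        · exact absurd hft hcon
        · rfl
      obtain ⟨p⟩ := ConnectedComponent.exact (hy.trans hxc.symm)
      exact absurd (key y x p hy') (by simp [hfx])
    have hsubset : Subtype.val '' c.supp ⊆ {w | f w = false} := by
      rintro _ ⟨y, hy, rfl⟩
      exact hall y hy
    calc c.supp.ncard = (Subtype.val '' c.supp).ncard :=
          (Set.ncard_image_of_injective _ Subtype.val_injective).symm
      _ ≤ {w | f w = false}.ncard := Set.ncard_le_ncard hsubset (Set.toFinite _)
      _ ≤ b := hbf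
  have hsepNum : sepNum G b ≤ B.card := Nat.sInf_le ⟨B, hsep, rfl⟩
  have h1 : minSep G ≤ sepNum G b + b := Nat.sInf_le ⟨b, one_le_mNum G, rfl⟩
  omega

end Aux

theorem two_approx_by_vertex_separation {V : Type*} [Fintype V] [Nonempty V]
    (G : SimpleGraph V) :
    minSep G ≤ 2 * mNum G ∧ mNum G ≤ minSep G :=
  ⟨minSep_le_two_mNum G, mNum_le_minSep G⟩
end

section
/- Suppose in a graph G = (V,E) with reports from all vertices, we iteratively remove both endpoints of any edge on which the reports are not mutually 'truthful', stopping after i rounds when no bad report remains, and the corrupt party has budget b. Then the remaining graph H has |V| − 2i vertices, contains at most b − i corrupt vertices, and within each connected component of H all vertices have the same type (all truthful or all corrupt). -/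
open SimpleGraph

open SimpleGraph

/-- After iteratively removing both endpoints of every edge carrying a bad report
(the removed set `R` consists of `i` pairs of adjacent vertices, each with a
non-(truthful,truthful) pair of reports), if no bad report remains among the surviving
vertices, then the remaining graph `H` has `|V| - 2i` vertices, contains at most
`b - i` corrupt vertices, and each connected component of `H` is monochromatic. -/
theorem removal_procedure_properties {V : Type*} [Fintype V] [DecidableEq V]
    (G : SimpleGraph V) (f : V → Bool) (rep : V → V → Bool) (b i : ℕ)
    (R : Finset V) (p : Fin i → V × V)
    (hadj : ∀ j, G.Adj (p j).1 (p j).2)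
    (hbadrep : ∀ j, rep (p j).1 (p j).2 = false ∨ rep (p j).2 (p j).1 = false)
    (hR : (↑R : Set V) = ⋃ j, {(p j).1, (p j).2})
    (hRcard : R.card = 2 * i)
    (hclean : ∀ u v : V, u ∉ R → v ∉ R → G.Adj u v → rep u v = true)
    (hcons : Consistent G f rep) (hbad : badCount f ≤ b) :
    ((↑R : Set V)ᶜ.ncard = Fintype.card V - 2 * i) ∧
    ({v : V | v ∉ R ∧ f v = false}.ncard ≤ b - i) ∧
    (∀ u v : ((↑R : Set V)ᶜ : Set V),
      (G.induce ((↑R : Set V)ᶜ)).Reachable u v → f ↑u = f ↑v) := by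
  classical
  -- key edge lemma
  have key : ∀ a c : V, a ∉ R → c ∉ R → G.Adj a c → f a = f c := by
    intro a c ha hc hac
    have h1 := hclean a c ha hc hac
    have h2 := hclean c a hc ha hac.symm
    cases hfa : f a with
    | true =>
      have := hcons a c hac hfa
      rw [h1] at this; exact this
    | false =>
      cases hfc : f c with
      | false => rfl
      | true =>
        have := hcons c a hac.symm hfc
        rw [h2, hfa] at this; exact absurd this (by simp)
  refine ⟨?_, ?_, ?_⟩
  · -- cardinality of the complement
    have h1 : ((↑R : Set V)ᶜ).ncard = Fintype.card V - (↑R : Set V).ncard := by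
      rw [Set.ncard_eq_toFinset_card', Set.ncard_eq_toFinset_card']
      simp [Finset.card_compl]
    rw [h1, Set.ncard_coe_finset, hRcard]
  · -- corrupt count outside R
    -- at most i truthful vertices in R
    have hT : (R.filter (fun v => f v = true)).card ≤ i := by
      have hsub : R.filter (fun v => f v = true) ⊆
          Finset.univ.biUnion (fun j : Fin i =>
            ({(p j).1, (p j).2} : Finset V).filter (fun v => f v = true)) := by
        intro v hv
        rw [Finset.mem_filter] at hv
        have : v ∈ (↑R : Set V) := hv.1
        rw [hR] at this
        obtain ⟨s, ⟨j, rfl⟩, hvs⟩ := this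
        simp only [Finset.mem_biUnion, Finset.mem_univ, Finset.mem_filter,
          Finset.mem_insert, Finset.mem_singleton, true_and]
        exact ⟨j, by simpa using hvs, hv.2⟩
      calc (R.filter (fun v => f v = true)).card
          ≤ ∑ j : Fin i, (({(p j).1, (p j).2} : Finset V).filter
              (fun v => f v = true)).card :=
            le_trans (Finset.card_le_card hsub) (Finset.card_biUnion_le)
        _ ≤ ∑ _j : Fin i, 1 := by
            apply Finset.sum_le_sum
            intro j _
            rw [Finset.card_le_one]
            intro a ha c hc
            simp only [Finset.mem_filter, Finset.mem_insert, Finset.mem_singleton] at ha hc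
            -- both endpoints can't be truthful
            have hne : ¬ (f (p j).1 = true ∧ f (p j).2 = true) := by
              rintro ⟨hx, hy⟩
              have e1 := hcons (p j).1 (p j).2 (hadj j) hx
              have e2 := hcons (p j).2 (p j).1 (hadj j).symm hy
              rw [hy] at e1; rw [hx] at e2
              rcases hbadrep j with h | h
              · rw [e1] at h; exact absurd h (by simp)
              · rw [e2] at h; exact absurd h (by simp)
            rcases ha.1 with rfl | rfl <;> rcases hc.1 with rfl | rfl
            · rfl
            · exact absurd ⟨ha.2, hc.2⟩ hne
            · exact absurd ⟨hc.2, ha.2⟩ hne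
            · rfl
        _ = i := by simp
    -- hence at least i corrupt vertices in R
    have hC : i ≤ (R.filter (fun v => f v = false)).card := by
      have hsplit : (R.filter (fun v => f v = true)).card
          + (R.filter (fun v => f v = false)).card = R.card := by
        have := Finset.card_filter_add_card_filter_not (s := R)
          (p := fun v => f v = true)
        simpa [Bool.not_eq_true] using this
      omega
    -- total corrupt count
    have hout : {v : V | v ∉ R ∧ f v = false}.ncard
        = (Finset.univ.filter (fun v => v ∉ R ∧ f v = false)).card := by
      rw [Set.ncard_eq_toFinset_card']
      congr 1
      ext v; simp
    have htot : badCount f = (Finset.univ.filter (fun v => f v = false)).card := by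
      rw [badCount, Set.ncard_eq_toFinset_card']
      congr 1
      ext v; simp
    have hdisj : (Finset.univ.filter (fun v => v ∉ R ∧ f v = false)).card
        + (R.filter (fun v => f v = false)).card
        = (Finset.univ.filter (fun v => f v = false)).card := by
      rw [← Finset.card_union_of_disjoint]
      · congr 1
        ext v
        simp only [Finset.mem_union, Finset.mem_filter, Finset.mem_univ, true_and]
        tauto
      · rw [Finset.disjoint_left]
        intro v hv hv'
        rw [Finset.mem_filter] at hv hv'
        exact hv.2.1 hv'.1
    rw [hout]
    omega
  · -- monochromatic components
    intro u v h
    obtain ⟨w⟩ := h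
    induction w with
    | nil => rfl
    | @cons a c _ h w ih =>
      exact (key a c (by have := a.2; simp only [Set.mem_compl_iff, Finset.mem_coe] at this; exact this)
        (by have := c.2; simp only [Set.mem_compl_iff, Finset.mem_coe] at this; exact this) h).trans ih
end

section
/- In the star graph K_{1,n} with n ≥ 4 leaves, the critical number of corrupt nodes m(G) equals 2. -/
open SimpleGraph

theorem mNum_star (n : ℕ) (hn : 4 ≤ n) :
    mNum (completeBipartiteGraph (Fin 1) (Fin n)) = 2 := by
  set G := completeBipartiteGraph (Fin 1) (Fin n)
  set S : Set ℕ := {b | ∃ rep : (Fin 1 ⊕ Fin n) → (Fin 1 ⊕ Fin n) → Bool,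
    ∀ v, ∃ f, Consistent G f rep ∧ badCount f ≤ b ∧ f v = false} with hS
  have h2 : 2 ∈ S := by
    refine ⟨fun _ _ => false, fun v => ?_⟩
    refine ⟨fun u => if u = Sum.inl 0 ∨ u = v then false else true, ?_, ?_, ?_⟩
    · intro u w hadj hu
      simp only [completeBipartiteGraph_adj, G] at hadj
      cases u with
      | inl a =>
        exfalso
        have : a = 0 := Subsingleton.elim a 0
        simp [this] at hu
      | inr a =>
        cases w with
        | inl b =>
          have : b = 0 := Subsingleton.elim b 0
          simp [this]
        | inr b => simp at hadj
    · have hset : {u | (if u = Sum.inl 0 ∨ u = v then false else true) = false}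
          = {Sum.inl 0, v} := by
        ext x
        by_cases h : x = Sum.inl 0 ∨ x = v <;>
          simp [h, Set.mem_insert_iff, Set.mem_singleton_iff] <;> tauto
      unfold badCount
      rw [hset]
      calc ({Sum.inl 0, v} : Set (Fin 1 ⊕ Fin n)).ncard ≤ ({v} : Set _).ncard + 1 :=
            Set.ncard_insert_le _ _
        _ = 2 := by rw [Set.ncard_singleton]
    · simp
  have hlb : ∀ b ∈ S, 2 ≤ b := by
    intro b hb
    by_contra hlt
    push_neg at hlt
    have hb1 : b ≤ 1 := by omega
    obtain ⟨rep, h⟩ := hb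
    have h01 : (⟨0, by omega⟩ : Fin n) ≠ ⟨1, by omega⟩ := by simp
    obtain ⟨f0, hc0, hn0, hv0⟩ := h (Sum.inr ⟨0, by omega⟩)
    obtain ⟨f1, hc1, hn1, hv1⟩ := h (Sum.inr ⟨1, by omega⟩)
    have key : ∀ (f : (Fin 1 ⊕ Fin n) → Bool) (i : Fin n), Consistent G f rep →
        badCount f ≤ b → f (Sum.inr i) = false →
        f (Sum.inl 0) = true ∧ rep (Sum.inl 0) (Sum.inr ⟨1, by omega⟩) = f (Sum.inr ⟨1, by omega⟩) := by
      intro f i hc hnle hfi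
      have hone : ∀ a ∈ {v | f v = false}, ∀ c ∈ {v | f v = false}, a = c :=
        (Set.ncard_le_one (Set.toFinite _)).mp (le_trans hnle hb1)
      have hcenter : f (Sum.inl 0) = true := by
        by_contra hcf
        have : (Sum.inl 0 : Fin 1 ⊕ Fin n) = Sum.inr i :=
          hone _ (by simpa using Bool.not_eq_true _ |>.mp hcf) _ hfi
        simp at this
      exact ⟨hcenter, hc _ _ (by simp [G]) hcenter⟩
    obtain ⟨hc0t, hr0⟩ := key f0 _ hc0 hn0 hv0
    obtain ⟨hc1t, hr1⟩ := key f1 _ hc1 hn1 hv1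
    have hf01 : f0 (Sum.inr ⟨1, by omega⟩) = true := by
      by_contra hcf
      have hone : ∀ a ∈ {v | f0 v = false}, ∀ c ∈ {v | f0 v = false}, a = c :=
        (Set.ncard_le_one (Set.toFinite _)).mp (le_trans hn0 hb1)
      have : (Sum.inr (⟨0, by omega⟩ : Fin n) : Fin 1 ⊕ Fin n) = Sum.inr ⟨1, by omega⟩ :=
        hone _ hv0 _ (by simpa using Bool.not_eq_true _ |>.mp hcf)
      simp at this
    rw [hf01] at hr0
    rw [hv1] at hr1
    rw [hr0] at hr1
    simp at hr1
  exact le_antisymm (Nat.sInf_le h2) (le_csInf ⟨2, h2⟩ hlb)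
end

section
/- For the complete bipartite graph K_{a,b} with 1 ≤ a < b, the critical number of corrupt nodes is m(K_{a,b}) = a + 1. -/
open SimpleGraph

section Aux

variable {a b : ℕ}

lemma adjLR (i : Fin a) (j : Fin b) :
    (completeBipartiteGraph (Fin a) (Fin b)).Adj (Sum.inl i) (Sum.inr j) := by simp

lemma adjRL (i : Fin a) (j : Fin b) :
    (completeBipartiteGraph (Fin a) (Fin b)).Adj (Sum.inr j) (Sum.inl i) := by simp

lemma ncard_range_inl : (Set.range (Sum.inl : Fin a → Fin a ⊕ Fin b)).ncard = a := by
  rw [← Nat.card_coe_set_eq, Nat.card_range_of_injective Sum.inl_injective,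
    Nat.card_eq_fintype_card, Fintype.card_fin]

lemma ncard_range_inr : (Set.range (Sum.inr : Fin b → Fin a ⊕ Fin b)).ncard = b := by
  rw [← Nat.card_coe_set_eq, Nat.card_range_of_injective Sum.inr_injective,
    Nat.card_eq_fintype_card, Fintype.card_fin]

/-- If all of S2 is corrupt then badCount ≥ b. -/
lemma exists_true_inr (hab : a < b) (f : Fin a ⊕ Fin b → Bool) (hf : badCount f ≤ a) :
    ∃ j : Fin b, f (Sum.inr j) = true := by
  by_contra hc
  push_neg at hc
  have hsub : Set.range (Sum.inr : Fin b → Fin a ⊕ Fin b) ⊆ {v | f v = false} := by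
    rintro v ⟨j, rfl⟩
    simpa using hc j
  have := Set.ncard_le_ncard hsub (Set.toFinite _)
  rw [ncard_range_inr] at this
  exact absurd (this.trans hf) (by omega)

end Aux

theorem mNum_completeBipartite (a b : ℕ) (ha : 1 ≤ a) (hab : a < b) :
    mNum (completeBipartiteGraph (Fin a) (Fin b)) = a + 1 := by
  have hb0 : 0 < b := lt_of_le_of_lt (Nat.zero_le a) hab
  -- membership : budget a+1 suffices
  have hmem : (a + 1) ∈ {m | ∃ rep : Fin a ⊕ Fin b → Fin a ⊕ Fin b → Bool,
      ∀ v, ∃ f, Consistent (completeBipartiteGraph (Fin a) (Fin b)) f rep ∧ badCount f ≤ m ∧ f v = false} := by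
    refine ⟨fun _ _ => false, fun v => ?_⟩
    rcases v with i | j
    · refine ⟨Sum.elim (fun _ => false) (fun _ => true), ?_, ?_, rfl⟩
      · rintro (k | j') (k' | j') hadj hu <;> simp_all
      · have : {v | Sum.elim (fun _ => false) (fun _ => true) v = false}
            = Set.range (Sum.inl : Fin a → Fin a ⊕ Fin b) := by
          ext (k | j') <;> simp
        rw [badCount, this, ncard_range_inl]; omega
    · refine ⟨Sum.elim (fun _ => false) (fun j' => decide (j' ≠ j)), ?_, ?_, by simp⟩
      · rintro (k | j') (k' | j'') hadj hu <;> simp_all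
      · have : {v | Sum.elim (fun _ => false) (fun j' => decide (j' ≠ j)) v = false}
            = Set.range (Sum.inl : Fin a → Fin a ⊕ Fin b) ∪ {Sum.inr j} := by
          ext (k | j') <;> simp
        rw [badCount, this, Set.ncard_union_eq ?disj (Set.toFinite _) (Set.toFinite _),
          ncard_range_inl, Set.ncard_singleton]
        case disj =>
          rw [Set.disjoint_singleton_right]
          rintro ⟨k, h⟩; exact absurd h (by simp)
  -- lower bound : budget ≤ a fails
  have hlow : ∀ m ∈ {m | ∃ rep : Fin a ⊕ Fin b → Fin a ⊕ Fin b → Bool,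
      ∀ v, ∃ f, Consistent (completeBipartiteGraph (Fin a) (Fin b)) f rep ∧ badCount f ≤ m ∧ f v = false}, a + 1 ≤ m := by
    rintro m ⟨rep, H⟩
    by_contra hle
    push_neg at hle
    have hma : m ≤ a := by omega
    -- the config killing (inr 0)
    obtain ⟨g, hgC, hgB, hg0⟩ := H (Sum.inr ⟨0, hb0⟩)
    have hgB' : badCount g ≤ a := hgB.trans hma
    -- g must have a truthful vertex in S1
    have hgi : ∃ i, g (Sum.inl i) = true := by
      by_contra hc
      push_neg at hc
      have hsub : Set.range (Sum.inl : Fin a → Fin a ⊕ Fin b) ∪ {Sum.inr ⟨0, hb0⟩}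
          ⊆ {v | g v = false} := by
        rintro v (⟨k, rfl⟩ | rfl)
        · simpa using hc k
        · exact hg0
      have hcard := Set.ncard_le_ncard hsub (Set.toFinite _)
      rw [Set.ncard_union_eq ?disj (Set.toFinite _) (Set.toFinite _),
        ncard_range_inl, Set.ncard_singleton] at hcard
      case disj =>
        rw [Set.disjoint_singleton_right]
        rintro ⟨k, h⟩; exact absurd h (by simp)
      exact absurd (hcard.trans hgB') (by omega)
    obtain ⟨i, hgi⟩ := hgi
    -- the config killing (inl i)
    obtain ⟨h, hhC, hhB, hhi⟩ := H (Sum.inl i)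
    have hhB' : badCount h ≤ a := hhB.trans hma
    -- truthful vertices of h are corrupt in g, S2 part
    have keyR : ∀ j, h (Sum.inr j) = true → g (Sum.inr j) = false := by
      intro j hj
      by_contra hc
      have hgj : g (Sum.inr j) = true := by
        cases hx : g (Sum.inr j) <;> simp_all
      have e1 := hhC _ _ (adjRL i j) hj
      have e2 := hgC _ _ (adjRL i j) hgj
      rw [hhi] at e1; rw [hgi] at e2; rw [e1] at e2; exact Bool.false_ne_true e2
    -- S1 part
    have keyL : ∀ k, h (Sum.inl k) = true → g (Sum.inl k) = false := by
      intro k hk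
      by_contra hc
      have hgk : g (Sum.inl k) = true := by
        cases hx : g (Sum.inl k) <;> simp_all
      obtain ⟨j0, hj0⟩ := exists_true_inr hab h hhB'
      have e1 := hhC _ _ (adjLR k j0) hk
      have e2 := hgC _ _ (adjLR k j0) hgk
      rw [hj0] at e1
      rw [e1, keyR j0 hj0] at e2
      simp at e2
    -- counting
    have hsub : {v | h v = true} ⊆ {v | g v = false} := by
      rintro (k | j) hv
      · exact keyL k hv
      · exact keyR j hv
    have h1 : {v : Fin a ⊕ Fin b | h v = true}.ncard ≤ badCount g :=
      Set.ncard_le_ncard hsub (Set.toFinite _)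
    have hcompl : {v : Fin a ⊕ Fin b | h v = false}ᶜ = {v | h v = true} := by
      ext v; simp
    have h2 := Set.ncard_add_ncard_compl {v : Fin a ⊕ Fin b | h v = false}
      (Set.toFinite _) (Set.toFinite _)
    rw [hcompl] at h2
    have hcardV : Nat.card (Fin a ⊕ Fin b) = a + b := by
      simp [Nat.card_eq_fintype_card]
    rw [hcardV] at h2
    have hbh : badCount h = {v : Fin a ⊕ Fin b | h v = false}.ncard := rfl
    have : b ≤ a := by
      have := h1.trans hgB'
      omega
    omega
  exact le_antisymm (Nat.sInf_le hmem) (le_csInf ⟨a + 1, hmem⟩ hlow)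
end

section
/- In a directed graph D, if after the report-based edge removal procedure the remaining graph H contains only 'truthful' reports and at most t corrupt vertices, then any vertex v of H whose reachability index |R_H(v)| (number of vertices of H that can reach v by a directed path) is at least t must be truthful. -/
/-- Consistency of a configuration with reports on a directed graph (given by the
adjacency relation `A`): every truthful vertex reports the true type of each of its
out-neighbors. -/
def DConsistent {V : Type*} (A : V → V → Prop) (f : V → Bool) (rep : V → V → Bool) : Prop :=
  ∀ u v : V, A u v → f u = true → rep u v = f v

/-- The number of corrupt vertices in a configuration. -/
noncomputable def dBadCount {V : Type*} (f : V → Bool) : ℕ :=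
  {v : V | f v = false}.ncard

/-- `S` is a `k`-reachability separator of the digraph `A`: after deleting `S`,
every remaining vertex `v` has reachability index at most `k`, where the reachability
index of `v` is the number of remaining vertices that can reach `v` by a directed path. -/
def IsReachSep {V : Type*} (A : V → V → Prop) (S : Finset V) (k : ℕ) : Prop :=
  ∀ v : ((↑S : Set V)ᶜ : Set V),
    {u : ((↑S : Set V)ᶜ : Set V) |
      Relation.ReflTransGen (fun x y : ((↑S : Set V)ᶜ : Set V) => A ↑x ↑y) u v}.ncard ≤ k

/-- `S_D(k)`: the minimum size of a `k`-reachability separator. -/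
noncomputable def dSepNum {V : Type*} [Fintype V] (A : V → V → Prop) (k : ℕ) : ℕ :=
  sInf {s | ∃ S : Finset V, IsReachSep A S k ∧ S.card = s}

/-- `min_k (S_D(k) + k)`. -/
noncomputable def dMinSep {V : Type*} [Fintype V] (A : V → V → Prop) : ℕ :=
  sInf {x | ∃ k, x = dSepNum A k + k}

/-- `m(D)`: the minimum budget `b` for which the corrupt party can choose at most `b`
corrupt vertices and reports making it impossible to identify a single truthful vertex. -/
noncomputable def dmNum {V : Type*} [Fintype V] (A : V → V → Prop) : ℕ :=
  sInf {b | ∃ rep : V → V → Bool, ∀ v : V, ∃ f : V → Bool,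
    DConsistent A f rep ∧ dBadCount f ≤ b ∧ f v = false}

/-- In a directed graph where all remaining reports are 'truthful' and there are at most
`t` corrupt vertices, any vertex that can be reached by at least `t` other vertices
must be truthful. -/
theorem high_reachability_truthful {V : Type*} [Fintype V] (A : V → V → Prop)
    (f : V → Bool) (rep : V → V → Bool) (t : ℕ)
    (hcons : DConsistent A f rep)
    (hclean : ∀ u v : V, A u v → rep u v = true)
    (hbad : dBadCount f ≤ t)
    (v : V) (hreach : t ≤ {u : V | u ≠ v ∧ Relation.ReflTransGen A u v}.ncard) :
    f v = true := by
  by_contra hv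
  have hv' : f v = false := by simpa using hv
  -- truthfulness propagates: if u reaches w and f u = true then f w = true
  have prop : ∀ u w : V, Relation.ReflTransGen A u w → f u = true → f w = true := by
    intro u w h hu
    induction h with
    | refl => exact hu
    | tail _ hstep ih =>
      rename_i b c _
      have := hcons b c hstep ih
      rw [hclean b c hstep] at this
      exact this.symm
  -- so every u reaching v is corrupt
  have hsub : insert v {u : V | u ≠ v ∧ Relation.ReflTransGen A u v} ⊆ {x : V | f x = false} := by
    intro x hx
    rcases hx with rfl | hx
    · exact hv'
    · rcases Bool.eq_false_or_eq_true (f x) with h | h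
      · exact absurd (prop x v hx.2 h) (by simp [hv'])
      · exact h
  have hfin : ({x : V | f x = false} : Set V).Finite := Set.toFinite _
  have hcard := Set.ncard_le_ncard hsub hfin
  rw [Set.ncard_insert_of_notMem (by simp) (Set.toFinite _)] at hcard
  have : t + 1 ≤ dBadCount f := le_trans (by omega) hcard
  omega
end

section
/- Let D = (V,E) be a directed graph. Then (1/2)·min over k of (S_D(k) + k) ≤ m(D) ≤ min over k of (S_D(k) + k), where S_D(k) is the minimum size of a k-reachability separator. -/
open scoped Classical

private lemma dm_set_nonempty {V : Type*} [Fintype V] (A : V → V → Prop) :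
    {b | ∃ rep : V → V → Bool, ∀ v : V, ∃ f : V → Bool,
      DConsistent A f rep ∧ dBadCount f ≤ b ∧ f v = false}.Nonempty := by
  refine ⟨Fintype.card V, fun _ _ => false, fun v => ⟨fun _ => false, ?_, ?_, rfl⟩⟩
  · intro u w _ h; simp at h
  · have h1 : dBadCount (fun _ : V => false) = (Set.univ : Set V).ncard := by
      unfold dBadCount; congr 1; ext x; simp
    rw [h1, Set.ncard_univ, Nat.card_eq_fintype_card]

private lemma dm_le_sep {V : Type*} [Fintype V] (A : V → V → Prop)
    {S : Finset V} {k : ℕ} (hS : IsReachSep A S k) :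
    dmNum A ≤ S.card + k := by
  apply Nat.sInf_le
  refine ⟨fun _ w => decide (w ∉ S), fun v => ?_⟩
  by_cases hv : v ∈ S
  · refine ⟨fun x => decide (x ∉ S), fun u w hA hu => rfl, ?_, by simp [hv]⟩
    have h1 : {x : V | decide (x ∉ S) = false} = ↑S := by ext x; simp
    simp only [dBadCount, h1, Set.ncard_coe_finset]
    omega
  · have hv' : v ∈ ((↑S : Set V)ᶜ) := by simpa using hv
    set vv : ((↑S : Set V)ᶜ : Set V) := ⟨v, hv'⟩ with hvv
    set R : Set ((↑S : Set V)ᶜ : Set V) :=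
      {u | Relation.ReflTransGen (fun x y : ((↑S : Set V)ᶜ : Set V) => A ↑x ↑y) u vv} with hR
    set B : Set V := ↑S ∪ Subtype.val '' R with hB
    refine ⟨fun x => !(decide (x ∈ B)), ?_, ?_, ?_⟩
    · intro u w hA hu
      have huB : u ∉ B := by
        by_contra h
        simp [h] at hu
      by_cases hw : w ∈ S
      · have hwB : w ∈ B := Or.inl hw
        simp [hw, hwB]
      · have hwB : w ∉ B := by
          intro h
          rcases h with h | ⟨c, hc, hcw⟩
          · exact hw h
          · -- w is in the image of R, so u reaches vv too
            have huS : u ∉ S := fun h => huB (Or.inl h)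
            have huS' : u ∈ ((↑S : Set V)ᶜ) := by simpa using huS
            have : Relation.ReflTransGen
                (fun x y : ((↑S : Set V)ᶜ : Set V) => A ↑x ↑y) ⟨u, huS'⟩ vv := by
              refine Relation.ReflTransGen.head ?_ hc
              show A u ↑c
              rw [hcw]; exact hA
            exact huB (Or.inr ⟨⟨u, huS'⟩, this, rfl⟩)
        simp [hw, hwB]
    · have h1 : {x : V | (!(decide (x ∈ B))) = false} = B := by ext x; simp
      have h2 : B.ncard ≤ S.card + k := by
        calc B.ncard ≤ (↑S : Set V).ncard + (Subtype.val '' R).ncard :=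
              Set.ncard_union_le _ _
          _ = S.card + R.ncard := by
              rw [Set.ncard_coe_finset, Set.ncard_image_of_injective _ Subtype.val_injective]
          _ ≤ S.card + k := by
              have h := hS vv
              have h' : R.ncard ≤ k := by rw [hR]; exact h
              omega
      simpa [dBadCount, h1] using h2
    · have : v ∈ B := Or.inr ⟨vv, Relation.ReflTransGen.refl, rfl⟩
      simp [this]

theorem two_approx_directed {V : Type*} [Fintype V] (A : V → V → Prop)
    (hirr : Irreflexive A) :
    dMinSep A ≤ 2 * dmNum A ∧ dmNum A ≤ dMinSep A := by
  constructor
  · -- lower bound: dMinSep ≤ 2 * dmNum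
    set m := dmNum A with hm
    obtain ⟨rep, hrep⟩ := Nat.sInf_mem (dm_set_nonempty A)
    cases isEmpty_or_nonempty V with
    | inl hE =>
      have hsep : IsReachSep A (∅ : Finset V) 0 := fun v => (hE.false v.1).elim
      have h1 : dSepNum A 0 ≤ 0 := Nat.sInf_le ⟨∅, hsep, Finset.card_empty⟩
      have h2 : dMinSep A ≤ dSepNum A 0 + 0 := Nat.sInf_le ⟨0, rfl⟩
      omega
    | inr hNE =>
      obtain ⟨f0, hc0, hb0, hv0⟩ := hrep (Classical.arbitrary V)
      set S : Finset V := {x : V | f0 x = false}.toFinset with hSdef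
      have hmemS : ∀ x : V, x ∈ S ↔ f0 x = false := by
        intro x; simp [hSdef]
      have hcardS : S.card ≤ m := by
        have : S.card = {x : V | f0 x = false}.ncard := by
          rw [Set.ncard_eq_toFinset_card']
        rw [this]; exact hb0
      have hsep : IsReachSep A S m := by
        intro v
        obtain ⟨fv, hcv, hbv, hfv⟩ := hrep ↑v
        -- every u reaching v in D - S is corrupt under fv
        have key : ∀ (u : ((↑S : Set V)ᶜ : Set V)),
            Relation.ReflTransGen (fun x y : ((↑S : Set V)ᶜ : Set V) => A ↑x ↑y) u v →
            fv ↑u = false := by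
          intro u hu
          induction hu using Relation.ReflTransGen.head_induction_on with
          | refl => exact hfv
          | head hab _ ih =>
            rename_i a c _
            have haS : (↑a : V) ∉ S := a.2
            have hcS : (↑c : V) ∉ S := c.2
            have hfa : f0 ↑a = true := by
              cases h : f0 (↑a : V) with
              | false => exact absurd ((hmemS _).2 h) haS
              | true => rfl
            have hfc : f0 ↑c = true := by
              cases h : f0 (↑c : V) with
              | false => exact absurd ((hmemS _).2 h) hcS
              | true => rfl
            have hrab : rep ↑a ↑c = true := by
              rw [hc0 ↑a ↑c hab hfa]; exact hfc
            by_contra h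
            have hfa' : fv ↑a = true := by
              cases h' : fv (↑a : V) with
              | false => exact absurd h' h
              | true => rfl
            have := hcv ↑a ↑c hab hfa'
            rw [hrab] at this
            rw [← this] at ih
            simp at ih
        calc {u : ((↑S : Set V)ᶜ : Set V) |
              Relation.ReflTransGen (fun x y : ((↑S : Set V)ᶜ : Set V) => A ↑x ↑y) u v}.ncard
            = (Subtype.val '' {u : ((↑S : Set V)ᶜ : Set V) |
                Relation.ReflTransGen (fun x y : ((↑S : Set V)ᶜ : Set V) => A ↑x ↑y) u v}).ncard :=
              (Set.ncard_image_of_injective _ Subtype.val_injective).symm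
          _ ≤ {x : V | fv x = false}.ncard := by
              apply Set.ncard_le_ncard _ (Set.toFinite _)
              rintro x ⟨u, hu, rfl⟩
              exact key u hu
          _ ≤ m := hbv
      have h1 : dSepNum A m ≤ m :=
        le_trans (Nat.sInf_le ⟨S, hsep, rfl⟩) hcardS
      have h2 : dMinSep A ≤ dSepNum A m + m := Nat.sInf_le ⟨m, rfl⟩
      rw [two_mul]
      exact le_trans h2 (Nat.add_le_add_right h1 m)
  · -- upper bound: dmNum ≤ dMinSep
    have hne : {x | ∃ k, x = dSepNum A k + k}.Nonempty := ⟨dSepNum A 0 + 0, 0, rfl⟩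
    obtain ⟨k, hk⟩ := Nat.sInf_mem hne
    have hsne : {s | ∃ S : Finset V, IsReachSep A S k ∧ S.card = s}.Nonempty := by
      refine ⟨(Finset.univ : Finset V).card, Finset.univ, ?_, rfl⟩
      intro v
      exfalso
      have := v.2
      simp at this
    obtain ⟨S, hS, hScard⟩ := Nat.sInf_mem hsne
    calc dmNum A ≤ S.card + k := dm_le_sep A hS
      _ = dSepNum A k + k := by rw [hScard]; rfl
      _ = dMinSep A := hk.symm
end

section
/- For any graph G and any 1 ≤ g ≤ |V|, the critical numbers satisfy m(G) ≤ m(G, g) + g − 1, where m(G, g) is the minimum number of corrupt vertices needed to prevent identification of g truthful vertices and m(G) = m(G, 1). -/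
open SimpleGraph

/-- `m(G,g)`: the minimum budget `b` such that for some reports, the set of vertices
that are truthful in every configuration consistent with the reports having at most `b`
corrupt vertices has size less than `g` (so `g` truthful vertices cannot be identified). -/
noncomputable def mNumG {V : Type*} [Fintype V] (G : SimpleGraph V) (g : ℕ) : ℕ :=
  sInf {b | ∃ rep : V → V → Bool,
    {v : V | ∀ f : V → Bool, Consistent G f rep → badCount f ≤ b → f v = true}.ncard < g}

/-- `U` is a `g`-remainder `k`-vertex separator of `G`: after removing `U`, the connected
components of size greater than `k` have total size less than `g`. -/
def IsGKSep {V : Type*} (G : SimpleGraph V) (U : Finset V) (k g : ℕ) : Prop :=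
  {v : ((↑U : Set V)ᶜ : Set V) |
    k < ((G.induce ((↑U : Set V)ᶜ)).connectedComponentMk v).supp.ncard}.ncard < g

/-- `S_G(k,g)`: the minimum size of a `g`-remainder `k`-vertex separator. -/
noncomputable def sepNumG {V : Type*} [Fintype V] (G : SimpleGraph V) (k g : ℕ) : ℕ :=
  sInf {s | ∃ U : Finset V, IsGKSep G U k g ∧ U.card = s}

/-- `min_k (S_G(k,g) + k)`. -/
noncomputable def minSepG {V : Type*} [Fintype V] (G : SimpleGraph V) (g : ℕ) : ℕ :=
  sInf {x | ∃ k, x = sepNumG G k g + k}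

/- Fix reports `rep` and a budget `b`, and let `T` be the set of vertices that are truthful in every
consistent configuration with at most `b` corrupt vertices. Declaring `T` corrupt as well, and
having every vertex report the members of `T` as corrupt, hides every vertex: each one is corrupt in
some consistent configuration with at most `b + |T|` corrupt vertices. For `b = m(G, g)` the reports
can be chosen with `|T| < g`. -/

section SurelyTruthful

variable {V : Type*} (G : SimpleGraph V)

def surelyTruthful (rep : V → V → Bool) (b : ℕ) : Set V :=
  {v | ∀ f : V → Bool, Consistent G f rep → badCount f ≤ b → f v = true}

variable {G}

theorem notMem_surelyTruthful_iff {rep : V → V → Bool} {b : ℕ} {v : V} :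
    v ∉ surelyTruthful G rep b ↔
      ∃ f : V → Bool, Consistent G f rep ∧ badCount f ≤ b ∧ f v = false := by
  simp [surelyTruthful]

theorem consistent_const_false (rep : V → V → Bool) : Consistent G (fun _ => false) rep :=
  fun _ _ _ h => Bool.false_ne_true h |>.elim

theorem Consistent.piecewise_false {f : V → Bool} {rep : V → V → Bool}
    (h : Consistent G f rep) (T : Set V) [∀ v, Decidable (v ∈ T)] :
    Consistent G (T.piecewise (fun _ => false) f)
      (fun u => T.piecewise (fun _ => false) (rep u)) := by
  intro u w hadj hu
  have huT : u ∉ T := fun huT => by simp [huT] at hu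
  rw [Set.piecewise_eq_of_notMem _ _ _ huT] at hu
  by_cases hwT : w ∈ T
  · simp [hwT]
  · simp [hwT, h u w hadj hu]

theorem badCount_piecewise_false_le [Finite V] (f : V → Bool) (T : Set V)
    [∀ v, Decidable (v ∈ T)] :
    badCount (T.piecewise (fun _ => false) f) ≤ badCount f + T.ncard := by
  have hsub : {v | T.piecewise (fun _ => false) f v = false} ⊆ {v | f v = false} ∪ T := by
    intro v hv
    by_cases hvT : v ∈ T
    · exact .inr hvT
    · exact .inl (by simpa [hvT] using hv)
  exact (Set.ncard_le_ncard hsub (Set.toFinite _)).trans (Set.ncard_union_le _ _)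

variable [Fintype V]

theorem badCount_le_card (f : V → Bool) : badCount f ≤ Fintype.card V := by
  rw [badCount, ← Nat.card_eq_fintype_card, ← Set.ncard_univ]
  exact Set.ncard_le_ncard (Set.subset_univ _)

theorem mNumG_eq_sInf (g : ℕ) :
    mNumG G g = sInf {b | ∃ rep, (surelyTruthful G rep b).ncard < g} :=
  rfl

theorem mNum_eq_mNumG_one : mNum G = mNumG G 1 := by
  rw [mNum, mNumG_eq_sInf]
  congr 1
  ext b
  simp only [Set.mem_ofPred_eq, Nat.lt_one_iff, Set.ncard_eq_zero (Set.toFinite _),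
    Set.eq_empty_iff_forall_notMem, notMem_surelyTruthful_iff]

theorem exists_ncard_surelyTruthful_mNumG_lt {g : ℕ} (hg : 1 ≤ g) :
    ∃ rep, (surelyTruthful G rep (mNumG G g)).ncard < g := by
  apply Nat.sInf_mem (s := {b | ∃ rep, (surelyTruthful G rep b).ncard < g})
  refine ⟨Fintype.card V, fun _ _ => false, ?_⟩
  suffices surelyTruthful G (fun _ _ => false) (Fintype.card V) = ∅ by
    simp only [this, Set.ncard_empty]; omega
  refine Set.eq_empty_of_forall_notMem fun v => notMem_surelyTruthful_iff.mpr ?_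
  exact ⟨fun _ => false, consistent_const_false _, badCount_le_card _, rfl⟩

theorem mNum_le_add_ncard_surelyTruthful (rep : V → V → Bool) (b : ℕ) :
    mNum G ≤ b + (surelyTruthful G rep b).ncard := by
  classical
  set T := surelyTruthful G rep b
  by_cases hT : T = Set.univ
  · -- no consistent configuration fits the budget `b`, so the all-corrupt one costs `|V| = |T|`
    refine Nat.sInf_le ⟨rep, fun v => ⟨fun _ => false, consistent_const_false rep, ?_, rfl⟩⟩
    rw [hT, Set.ncard_univ, Nat.card_eq_fintype_card]
    exact (badCount_le_card _).trans (Nat.le_add_left _ _)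
  obtain ⟨w, hw⟩ := (Set.ne_univ_iff_exists_notMem T).mp hT
  obtain ⟨f₀, hf₀, hb₀, -⟩ := notMem_surelyTruthful_iff.mp hw
  refine Nat.sInf_le ⟨fun u => T.piecewise (fun _ => false) (rep u), fun v => ?_⟩
  obtain ⟨f, hf, hbf, hfv⟩ :
      ∃ f, Consistent G f rep ∧ badCount f ≤ b ∧ (v ∉ T → f v = false) := by
    by_cases hv : v ∈ T
    · exact ⟨f₀, hf₀, hb₀, absurd hv⟩
    · obtain ⟨f, hf, hbf, hfv⟩ := notMem_surelyTruthful_iff.mp hv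
      exact ⟨f, hf, hbf, fun _ => hfv⟩
  refine ⟨T.piecewise (fun _ => false) f, hf.piecewise_false T,
    (badCount_piecewise_false_le f T).trans (by omega), ?_⟩
  by_cases hv : v ∈ T <;> simp [hv, hfv]

end SurelyTruthful

theorem mNum_le_mNumG_add_general {V : Type*} [Fintype V] (G : SimpleGraph V) (g : ℕ)
    (hg1 : 1 ≤ g) :
    mNum G = mNumG G 1 ∧ mNum G ≤ mNumG G g + g - 1 := by
  refine ⟨mNum_eq_mNumG_one, ?_⟩
  obtain ⟨rep, hT⟩ := exists_ncard_surelyTruthful_mNumG_lt (G := G) hg1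
  have := mNum_le_add_ncard_surelyTruthful (G := G) rep (mNumG G g)
  omega

theorem mNum_le_mNumG_add {V : Type*} [Fintype V] (G : SimpleGraph V) (g : ℕ)
    (hg1 : 1 ≤ g) (hg2 : g ≤ Fintype.card V) :
    mNum G = mNumG G 1 ∧ mNum G ≤ mNumG G g + g - 1 :=
  mNum_le_mNumG_add_general G g hg1
end

section
/- For any graph G and 1 ≤ g ≤ |V|: (1/2)·min over k of (S_G(k,g) + k) ≤ m(G,g) ≤ min over k of (S_G(k,g) + k), where S_G(k,g) is the minimum size of a g-remainder k-vertex separator. -/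
open SimpleGraph

lemma reach_prop {V' : Type*} {G' : SimpleGraph V'} {p : V' → Prop}
    (h : ∀ x y, G'.Adj x y → p x → p y) {a b : V'} (hr : G'.Reachable a b)
    (ha : p a) : p b := by
  obtain ⟨w⟩ := hr
  induction w with
  | nil => exact ha
  | cons hadj _ ih => exact ih (h _ _ hadj ha)

theorem two_approx_g_remainder {V : Type*} [Fintype V] (G : SimpleGraph V) (g : ℕ)
    (hg1 : 1 ≤ g) (hg2 : g ≤ Fintype.card V) :
    minSepG G g ≤ 2 * mNumG G g ∧ mNumG G g ≤ minSepG G g := by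
  classical
  have upper : mNumG G g ≤ minSepG G g := by
    refine le_csInf ⟨sepNumG G 0 g + 0, ⟨0, rfl⟩⟩ ?_
    rintro x ⟨k, rfl⟩
    have hne : {s | ∃ U : Finset V, IsGKSep G U k g ∧ U.card = s}.Nonempty := by
      refine ⟨(Finset.univ : Finset V).card, Finset.univ, ?_, rfl⟩
      unfold IsGKSep
      have he : IsEmpty ((↑(Finset.univ : Finset V) : Set V)ᶜ : Set V) := by simp
      rw [Set.eq_empty_of_isEmpty
        {v : ((↑(Finset.univ : Finset V) : Set V)ᶜ : Set V) |
          k < ((G.induce _).connectedComponentMk v).supp.ncard}, Set.ncard_empty]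
      exact hg1
    obtain ⟨U, hU, hUcard⟩ := Nat.sInf_mem hne
    rw [show sInf {s | ∃ U : Finset V, IsGKSep G U k g ∧ U.card = s} = sepNumG G k g
      from rfl] at hUcard
    unfold mNumG
    apply Nat.sInf_le
    set rep : V → V → Bool := fun _ w => if w ∈ (↑U : Set V) then false else true with hrepdef
    refine ⟨rep, ?_⟩
    set T := {v : V | ∀ f : V → Bool, Consistent G f rep →
      badCount f ≤ sepNumG G k g + k → f v = true} with hTdef
    have hsub : T ⊆ Subtype.val '' {v : ((↑U : Set V)ᶜ : Set V) |
        k < ((G.induce ((↑U : Set V)ᶜ)).connectedComponentMk v).supp.ncard} := by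
      intro v hv
      have hvU : v ∉ (↑U : Set V) := by
        intro hvU
        set f : V → Bool := fun w => if w ∈ (↑U : Set V) then false else true with hfdef
        have hcons : Consistent G f rep := fun _ _ _ _ => rfl
        have hbad : badCount f ≤ sepNumG G k g + k := by
          have hfe : {w | f w = false} = (↑U : Set V) := by
            ext w; by_cases h : w ∈ (↑U : Set V) <;> simp [hfdef, h]
          rw [badCount, hfe, Set.ncard_coe_finset, hUcard]; omega
        have hfalse : f v = false := by rw [hfdef]; exact if_pos hvU
        rw [hv f hcons hbad] at hfalse
        exact absurd hfalse (by simp)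
      have hvc : v ∈ ((↑U : Set V)ᶜ : Set V) := hvU
      have big : k <
          ((G.induce ((↑U : Set V)ᶜ)).connectedComponentMk ⟨v, hvc⟩).supp.ncard := by
        by_contra hsmall
        push_neg at hsmall
        set C := (G.induce ((↑U : Set V)ᶜ)).connectedComponentMk ⟨v, hvc⟩ with hCdef
        set B : Set V := (↑U : Set V) ∪ (Subtype.val '' C.supp) with hBdef
        set f : V → Bool := fun w => if w ∈ B then false else true with hfdef
        have hvB : v ∈ B := Or.inr ⟨⟨v, hvc⟩, rfl, rfl⟩
        have hcons : Consistent G f rep := by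
          intro u w hadj hu
          have huB : u ∉ B := by intro h; simp [hfdef, h] at hu
          have huU : u ∉ (↑U : Set V) := fun h => huB (Or.inl h)
          by_cases hwU : w ∈ (↑U : Set V)
          · have hwB : w ∈ B := Or.inl hwU
            show (if w ∈ (↑U : Set V) then false else true)
              = (if w ∈ B then false else true)
            rw [if_pos hwU, if_pos hwB]
          · have hwB : w ∉ B := by
              rintro (h | ⟨⟨w', hw'⟩, hwsupp, rfl⟩)
              · exact hwU h
              · have hadj' : (G.induce ((↑U : Set V)ᶜ)).Adj ⟨u, huU⟩ ⟨w', hw'⟩ := hadj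
                have hmem : (⟨u, huU⟩ : ((↑U : Set V)ᶜ : Set V)) ∈ C.supp := by
                  rw [ConnectedComponent.mem_supp_iff] at hwsupp ⊢
                  rw [← hwsupp]
                  exact ConnectedComponent.sound hadj'.reachable
                exact huB (Or.inr ⟨_, hmem, rfl⟩)
            show (if w ∈ (↑U : Set V) then false else true)
              = (if w ∈ B then false else true)
            rw [if_neg hwU, if_neg hwB]
        have hbad : badCount f ≤ sepNumG G k g + k := by
          have hfB : {w | f w = false} = B := by
            ext w; by_cases h : w ∈ B <;> simp [hfdef, h]
          rw [badCount, hfB]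
          calc B.ncard ≤ (↑U : Set V).ncard + (Subtype.val '' C.supp).ncard :=
                Set.ncard_union_le _ _
            _ = U.card + C.supp.ncard := by
                rw [Set.ncard_coe_finset,
                  Set.ncard_image_of_injective _ Subtype.val_injective]
            _ ≤ sepNumG G k g + k := by omega
        have hfalse : f v = false := by rw [hfdef]; exact if_pos hvB
        rw [hv f hcons hbad] at hfalse
        exact absurd hfalse (by simp)
      exact ⟨⟨v, hvc⟩, big, rfl⟩
    calc T.ncard ≤ (Subtype.val '' {v : ((↑U : Set V)ᶜ : Set V) |
            k < ((G.induce ((↑U : Set V)ᶜ)).connectedComponentMk v).supp.ncard}).ncard :=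
          Set.ncard_le_ncard hsub (Set.toFinite _)
      _ = _ := Set.ncard_image_of_injective _ Subtype.val_injective
      _ < g := hU
  refine ⟨?_, upper⟩
  -- lower bound
  have hbne : {b | ∃ rep : V → V → Bool,
      {v : V | ∀ f : V → Bool, Consistent G f rep → badCount f ≤ b → f v = true}.ncard
        < g}.Nonempty := by
    refine ⟨Fintype.card V, fun _ _ => false, ?_⟩
    have he : {v : V | ∀ f : V → Bool, Consistent G f (fun _ _ => false) →
        badCount f ≤ Fintype.card V → f v = true} = ∅ := by
      ext v
      simp only [Set.mem_setOf_eq, Set.mem_empty_iff_false, iff_false, not_forall]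
      refine ⟨fun _ => false, fun u w _ hu => by simp at hu, ?_, by simp⟩
      rw [badCount]
      calc Set.ncard _ ≤ (Set.univ : Set V).ncard :=
            Set.ncard_le_ncard (Set.subset_univ _) Set.finite_univ
        _ = Fintype.card V := by rw [Set.ncard_univ, Nat.card_eq_fintype_card]
    rw [he, Set.ncard_empty]
    exact hg1
  have hmem : ∃ rep : V → V → Bool,
      {v : V | ∀ f : V → Bool, Consistent G f rep → badCount f ≤ mNumG G g →
        f v = true}.ncard < g := Nat.sInf_mem hbne
  obtain ⟨rep, hT⟩ := hmem
  set b := mNumG G g with hbdef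
  set T := {v : V | ∀ f : V → Bool, Consistent G f rep → badCount f ≤ b → f v = true}
    with hTdef
  have hTne : ∃ v₀, v₀ ∉ T := by
    by_contra h
    push_neg at h
    have : T = Set.univ := Set.eq_univ_of_forall h
    rw [this, Set.ncard_univ, Nat.card_eq_fintype_card] at hT
    omega
  obtain ⟨v₀, hv₀⟩ := hTne
  rw [hTdef] at hv₀
  simp only [Set.mem_setOf_eq, not_forall] at hv₀
  obtain ⟨f₀, hf₀c, hf₀b, hf₀v⟩ := hv₀
  set U : Finset V := {w | f₀ w = false}.toFinset with hUdef
  have hUb : U.card ≤ b := by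
    rw [hUdef, ← Set.ncard_eq_toFinset_card']
    exact hf₀b
  have hUmem : ∀ w : V, w ∈ (↑U : Set V) ↔ f₀ w = false := by
    intro w; simp [hUdef]
  have hsep : IsGKSep G U b g := by
    unfold IsGKSep
    set S := {v : ((↑U : Set V)ᶜ : Set V) |
      b < ((G.induce ((↑U : Set V)ᶜ)).connectedComponentMk v).supp.ncard} with hSdef
    have hsub : Subtype.val '' S ⊆ T := by
      rintro _ ⟨⟨v, hvc⟩, hvS, rfl⟩
      intro f hc hb
      by_contra hfv
      have hfv' : f v = false := by revert hfv; cases f v <;> simp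
      set C := (G.induce ((↑U : Set V)ᶜ)).connectedComponentMk ⟨v, hvc⟩ with hCdef
      have hstep : ∀ x y : ((↑U : Set V)ᶜ : Set V),
          (G.induce ((↑U : Set V)ᶜ)).Adj x y → f ↑x = true → f ↑y = true := by
        intro x y hxy hfx
        have hxU : (↑x : V) ∉ (↑U : Set V) := x.2
        have hyU : (↑y : V) ∉ (↑U : Set V) := y.2
        have hf₀x : f₀ ↑x = true := by
          rw [hUmem] at hxU; revert hxU; cases f₀ (↑x : V) <;> simp
        have hf₀y : f₀ ↑y = true := by
          rw [hUmem] at hyU; revert hyU; cases f₀ (↑y : V) <;> simp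
        have hadjG : G.Adj (↑x : V) ↑y := hxy
        have hr : rep ↑x ↑y = f₀ ↑y := hf₀c ↑x ↑y hadjG hf₀x
        have hr2 : rep ↑x ↑y = f ↑y := hc ↑x ↑y hadjG hfx
        rw [hr, hf₀y] at hr2
        exact hr2.symm
      have hall : ∀ w ∈ C.supp, f ↑w = false := by
        intro w hw
        by_contra hfw
        have hfw' : f ↑w = true := by revert hfw; cases f (↑w : V) <;> simp
        have hreach : (G.induce ((↑U : Set V)ᶜ)).Reachable w ⟨v, hvc⟩ := by
          apply ConnectedComponent.exact
          rw [ConnectedComponent.mem_supp_iff] at hw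
          rw [hw]
        have := reach_prop hstep hreach hfw'
        rw [this] at hfv'
        exact absurd hfv' (by simp)
      have hsubB : Subtype.val '' C.supp ⊆ {w | f w = false} := by
        rintro _ ⟨w, hw, rfl⟩; exact hall w hw
      have hle : C.supp.ncard ≤ badCount f := by
        rw [badCount, ← Set.ncard_image_of_injective C.supp Subtype.val_injective]
        exact Set.ncard_le_ncard hsubB (Set.toFinite _)
      rw [hSdef, Set.mem_setOf_eq] at hvS
      have hvS' : b < C.supp.ncard := hvS
      omega
    calc S.ncard = (Subtype.val '' S).ncard :=
          (Set.ncard_image_of_injective _ Subtype.val_injective).symm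
      _ ≤ T.ncard := Set.ncard_le_ncard hsub (Set.toFinite _)
      _ < g := hT
  have h1 : sepNumG G b g ≤ b := le_trans (Nat.sInf_le ⟨U, hsep, rfl⟩) hUb
  have h2 : minSepG G g ≤ sepNumG G b g + b := Nat.sInf_le ⟨b, rfl⟩
  omega
end
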